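/- Let G=(V,E) be a finite simple graph with unanimity thresholds. Then the maximum of |σ(S)| over all subsets S ⊆ V equals the independence number α(G) of G. -/
import Mathlib


open scoped Classical

variable {V : Type*} [Fintype V]

/-- The open neighborhood of `v` as a `Finset`. -/
noncomputable def nbr (G : SimpleGraph V) (v : V) : Finset V :=
  Finset.univ.filter fun w => G.Adj v w

/-- The degree of a vertex. -/
noncomputable def deg (G : SimpleGraph V) (v : V) : ℕ := (nbr G v).card

/-- One round of the activation process: active vertices stay active and every vertex
having at least `thr v` active neighbors becomes active. -/
noncomputable def actStep (G : SimpleGraph V) (thr : V → ℕ) (A : Finset V) : Finset V :=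
  A ∪ Finset.univ.filter fun v => thr v ≤ (nbr G v ∩ A).card

/-- `sigmaCl G thr S` = σ[S], the set of vertices active at the end of the activation
process started with seed set `S` (iterating `|V|` rounds suffices to stabilize). -/
noncomputable def sigmaCl (G : SimpleGraph V) (thr : V → ℕ) (S : Finset V) : Finset V :=
  (actStep G thr)^[Fintype.card V] S

/-- `sigmaOp G thr S` = σ(S) = σ[S] \ S, the open activated set. -/
noncomputable def sigmaOp (G : SimpleGraph V) (thr : V → ℕ) (S : Finset V) : Finset V :=
  sigmaCl G thr S \ S

/-- The independence number of `G`: the maximum cardinality of a set of pairwise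
nonadjacent vertices. -/
noncomputable def alphaNum (G : SimpleGraph V) : ℕ :=
  Finset.univ.sup fun W : Finset V =>
    if ∀ u ∈ W, ∀ v ∈ W, ¬ G.Adj u v then W.card else 0

lemma mem_nbr {G : SimpleGraph V} {u v : V} (h : G.Adj u v) : v ∈ nbr G u := by
  simp [nbr, h]

lemma subset_actStep (G : SimpleGraph V) (thr : V → ℕ) (A : Finset V) :
    A ⊆ actStep G thr A := Finset.subset_union_left

lemma subset_iterate (G : SimpleGraph V) (thr : V → ℕ) (n : ℕ) (A : Finset V) :
    A ⊆ (actStep G thr)^[n] A := by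
  induction n with
  | zero => simp
  | succ n ih =>
      rw [Function.iterate_succ_apply']
      exact ih.trans (subset_actStep G thr _)

lemma actStep_new {G : SimpleGraph V} {A : Finset V} {v : V}
    (hv : v ∈ actStep G (deg G) A) : v ∈ A ∨ nbr G v ⊆ A := by
  rcases Finset.mem_union.1 hv with h | h
  · exact Or.inl h
  · right
    have h' : deg G v ≤ (nbr G v ∩ A).card := (Finset.mem_filter.1 h).2
    have := Finset.eq_of_subset_of_card_le Finset.inter_subset_left h'
    intro x hx
    exact (Finset.mem_inter.1 (this ▸ hx)).2

lemma nbr_subset_iter {G : SimpleGraph V} {S : Finset V} {v : V} {n : ℕ}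
    (hv : v ∈ (actStep G (deg G))^[n] S) (hvS : v ∉ S) :
    nbr G v ⊆ (actStep G (deg G))^[n] S := by
  induction n with
  | zero => exact absurd hv hvS
  | succ n ih =>
      rw [Function.iterate_succ_apply'] at hv ⊢
      rcases actStep_new hv with h | h
      · exact (ih h).trans (subset_actStep G _ _)
      · exact h.trans (subset_actStep G _ _)

lemma not_both_iter {G : SimpleGraph V} {S : Finset V} {u v : V}
    (hadj : G.Adj u v) (hu : u ∉ S) (hv : v ∉ S) (n : ℕ)
    (hun : u ∈ (actStep G (deg G))^[n] S) (hvn : v ∈ (actStep G (deg G))^[n] S) : False := by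
  induction n with
  | zero => exact hu hun
  | succ n ih =>
      rw [Function.iterate_succ_apply'] at hun hvn
      have hv' : v ∈ (actStep G (deg G))^[n] S := by
        rcases actStep_new hun with h | h
        · exact nbr_subset_iter h hu (mem_nbr hadj)
        · exact h (mem_nbr hadj)
      have hu' : u ∈ (actStep G (deg G))^[n] S :=
        nbr_subset_iter hv' hv (mem_nbr hadj.symm)
      exact ih hu' hv'

lemma sigmaOp_indep (G : SimpleGraph V) (S : Finset V) :
    ∀ u ∈ sigmaOp G (deg G) S, ∀ v ∈ sigmaOp G (deg G) S, ¬ G.Adj u v := by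
  intro u hu v hv hadj
  rw [sigmaOp, Finset.mem_sdiff] at hu hv
  exact not_both_iter hadj hu.2 hv.2 (Fintype.card V) hu.1 hv.1

/-- With unanimity thresholds, the maximum of |σ(S)| over all seed sets S equals the
independence number α(G). -/
theorem stmt2 (G : SimpleGraph V) :
    (Finset.univ.sup fun S : Finset V => (sigmaOp G (deg G) S).card) = alphaNum G := by
  apply le_antisymm
  · apply Finset.sup_le
    intro S _
    have h := Finset.le_sup (f := fun W : Finset V =>
      if ∀ u ∈ W, ∀ v ∈ W, ¬ G.Adj u v then W.card else 0)
      (Finset.mem_univ (sigmaOp G (deg G) S))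
    rw [if_pos (sigmaOp_indep G S)] at h
    rwa [alphaNum]
  · apply Finset.sup_le
    intro W _
    by_cases hW : ∀ u ∈ W, ∀ v ∈ W, ¬ G.Adj u v
    · rw [if_pos hW]
      have hsub : W ⊆ sigmaOp G (deg G) Wᶜ := by
        intro x hx
        rw [sigmaOp, Finset.mem_sdiff]
        constructor
        · have : Nonempty V := ⟨x⟩
          obtain ⟨n, hn⟩ := Nat.exists_eq_succ_of_ne_zero (Fintype.card_ne_zero (α := V))
          rw [sigmaCl, hn, Function.iterate_succ_apply]
          apply subset_iterate
          apply Finset.mem_union_right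
          rw [Finset.mem_filter]
          refine ⟨Finset.mem_univ x, ?_⟩
          have hns : nbr G x ⊆ Wᶜ := by
            intro y hy
            rw [Finset.mem_compl]
            intro hyW
            exact hW x hx y hyW ((Finset.mem_filter.1 hy).2)
          rw [Finset.inter_eq_left.2 hns, deg]
        · simp [hx]
      calc W.card ≤ (sigmaOp G (deg G) Wᶜ).card := Finset.card_le_card hsub
        _ ≤ _ := Finset.le_sup (f := fun S : Finset V => (sigmaOp G (deg G) S).card) (Finset.mem_univ Wᶜ)
    · rw [if_neg hW]; exact Nat.zero_le _
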